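/- arXiv:2511.06730 — 2 statements merged into one kernel-verified Lean document; each statement's English description precedes it below -/
import Mathlib

section
/- In any hoop, if the supremum y ∨ z exists in the induced order, then (x·y) ∨ (x·z) exists and x·(y ∨ z) = (x·y) ∨ (x·z). -/
/-- A hoop: a commutative monoid with a residuation-like arrow satisfying
(H1) `x → x = 1`, (H2) `(x·y) → z = x → (y → z)`, (H3) `x·(x→y) = y·(y→x)`. -/
class Hoop (α : Type*) extends CommMonoid α where
  arr : α → α → α
  arr_self : ∀ x : α, arr x x = 1
  arr_mul : ∀ x y z : α, arr (x * y) z = arr x (arr y z)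
  divis : ∀ x y : α, x * arr x y = y * arr y x

namespace Hoop

variable {α β γ : Type*} [Hoop α] [Hoop β] [Hoop γ]

/-- The induced order: `x ≤ y` iff `x → y = 1`. -/
def hle (x y : α) : Prop := arr x y = 1

/-- The induced meet: `x ∧ y = x·(x → y)`. -/
def hmeet (x y : α) : α := x * arr x y

/-- `s` is the supremum of `x` and `y` in the induced order of the hoop. -/
def IsSup (x y s : α) : Prop :=
  hle x s ∧ hle y s ∧ ∀ t : α, hle x t → hle y t → hle s t

lemma gam (x : α) : arr 1 x * arr (arr x 1) 1 = x := by
  have hb : arr (1 : α) x = x * arr x 1 := by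
    have h := divis (1 : α) x
    rwa [one_mul] at h
  have hxb : arr x (arr 1 x) = 1 := by
    rw [← arr_mul, mul_one, arr_self]
  have hbeta : arr (arr 1 x) x = arr (arr x 1) 1 := by
    rw [hb, mul_comm, arr_mul, arr_self]
  have h := divis (arr 1 x) x
  rw [hbeta, hxb, mul_one] at h
  exact h

lemma arr_one (x : α) : arr 1 x = x := by
  have heps : arr (1 : α) (arr 1 x) = arr 1 x := by
    rw [← arr_mul, one_mul]
  have hdel : arr (arr 1 x) 1 = arr x 1 := by
    have : arr x 1 = arr x (arr (arr 1 x) (arr 1 x)) := by rw [arr_self]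
    rw [this, ← arr_mul, mul_comm, arr_mul,
      show arr x (arr 1 x) = 1 by rw [← arr_mul, mul_one, arr_self]]
  have g1 := gam x
  have g2 := gam (arr 1 x)
  rw [heps, hdel] at g2
  exact (g1.symm.trans g2).symm

lemma mul_arr_one (x : α) : x * arr x 1 = x := by
  have h := divis x 1
  rwa [one_mul, arr_one] at h

lemma arr_to_one (x : α) : arr x 1 = 1 := by
  conv_lhs => rw [← mul_arr_one x]
  rw [mul_comm, arr_mul, arr_self]

lemma hle_trans {a b c : α} (h1 : arr a b = 1) (h2 : arr b c = 1) :
    arr a c = 1 := by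
  have : arr a c = arr (a * arr a b) c := by rw [h1, mul_one]
  rw [this, divis, mul_comm, arr_mul, h2, arr_to_one]

lemma arr_mul' (x u t : α) : arr (x * u) t = arr u (arr x t) := by
  rw [mul_comm, arr_mul]

/-- If `y ∨ z` exists then `(x·y) ∨ (x·z)` exists and equals `x·(y ∨ z)`. -/
theorem mul_sup (x y z s : α) (h : IsSup y z s) :
    IsSup (x * y) (x * z) (x * s) := by
  obtain ⟨h1, h2, h3⟩ := h
  have hs : arr s (arr x (x * s)) = 1 := by
    rw [← arr_mul', mul_comm, arr_self]
  refine ⟨?_, ?_, ?_⟩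
  · show arr (x * y) (x * s) = 1
    rw [arr_mul']
    exact hle_trans h1 hs
  · show arr (x * z) (x * s) = 1
    rw [arr_mul']
    exact hle_trans h2 hs
  · intro t ht1 ht2
    have ht1' : arr y (arr x t) = 1 := by rwa [← arr_mul']
    have ht2' : arr z (arr x t) = 1 := by rwa [← arr_mul']
    have := h3 (arr x t) ht1' ht2'
    show arr (x * s) t = 1
    rw [arr_mul']
    exact this

end Hoop
end

section
/- In the f-product A ⋉_f B of hoops, (a,x) ≤ (b,y) holds if and only if a ≤ b in A and x ≤ y in B; i.e., the order on A ⋉_f B is the restriction of the product order. -/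
namespace Hoop

variable {α β γ : Type*} [Hoop α] [Hoop β] [Hoop γ]

/-- A product morphism of hoops: `f 1 = 1` and
`f x · f y = f (x·y) = f x ∧ f y = f (x ∧ y)`. -/
def IsProdMorphism {α β : Type*} [Hoop α] [Hoop β] (f : α → β) : Prop :=
  f 1 = 1 ∧ ∀ x y : α,
    f x * f y = f (x * y) ∧ f (x * y) = hmeet (f x) (f y) ∧
      hmeet (f x) (f y) = f (hmeet x y)

/-- The underlying set of the `f`-product `A ⋉_f B`: pairs `(a, x)` with `a ≤ f x`. -/
def FSet {α β : Type*} [Hoop α] [Hoop β] (f : β → α) : Set (α × β) :=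
  {p | hle p.1 (f p.2)}

/-- The multiplication of the `f`-product: componentwise. -/
def fmul (p q : α × β) : α × β := (p.1 * q.1, p.2 * q.2)

/-- The arrow of the `f`-product: `(a,x) → (b,y) = (f(x→y) ∧ (a→b), x→y)`. -/
def farr (f : β → α) (p q : α × β) : α × β :=
  (hmeet (f (arr p.2 q.2)) (arr p.1 q.1), arr p.2 q.2)

/-- In the `f`-product, `(a,x) ≤ (b,y)` (i.e. `(a,x) → (b,y)` is the unit)
iff `a ≤ b` and `x ≤ y`: the order is the restriction of the product order. -/
theorem fprod_le_iff (f : β → α) (hf : IsProdMorphism f)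
    (a b : α) (x y : β)
    (hax : ((a, x) : α × β) ∈ FSet f) (hby : ((b, y) : α × β) ∈ FSet f) :
    farr f (a, x) (b, y) = ((1 : α), (1 : β)) ↔ hle a b ∧ hle x y := by
  have key : ∀ u v : α, arr 1 (arr u v) = arr u v := fun u v => by
    have h := arr_mul (1 : α) u v
    rw [one_mul] at h; exact h.symm
  constructor
  · intro h
    have h2 : arr x y = 1 := congrArg Prod.snd h
    have h1 : hmeet (f (arr x y)) (arr a b) = 1 := congrArg Prod.fst h
    rw [h2, hf.1] at h1
    unfold hmeet at h1
    rw [one_mul, key] at h1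
    exact ⟨h1, h2⟩
  · rintro ⟨h1, h2⟩
    unfold farr
    rw [show arr x y = 1 from h2, hf.1]
    unfold hmeet
    rw [show arr a b = 1 from h1, arr_self, one_mul]

end Hoop
end
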